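/- arXiv:2506.08611 — 5 statements merged into one kernel-verified Lean document; each statement's English description precedes it below -/
import Mathlib

section
/- Let n ≥ 1, z : Fin n → ℝ, and let i be an index such that z j ≤ z i for all j and z j < z i for some j. Then the map τ ↦ softmaxτ(z, τ)_i is strictly antitone on (0, ∞): for all 0 < τ₁ < τ₂ one has softmaxτ(z, τ₂)_i < softmaxτ(z, τ₁)_i. -/
open Real Set

/-- Tempered softmax of logits `z` at temperature `τ`. -/
noncomputable def softmaxT {n : ℕ} (z : Fin n → ℝ) (τ : ℝ) (i : Fin n) : ℝ :=
  Real.exp (z i / τ) / ∑ j, Real.exp (z j / τ)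

lemma softmaxT_eq_inv {n : ℕ} (z : Fin n → ℝ) (τ : ℝ) (hτ : 0 < τ) (i : Fin n) :
    softmaxT z τ i = (∑ j, Real.exp ((z j - z i) / τ))⁻¹ := by
  have h : ∀ j, Real.exp (z j / τ) = Real.exp (z i / τ) * Real.exp ((z j - z i) / τ) := by
    intro j
    rw [← Real.exp_add]
    ring_nf
  unfold softmaxT
  rw [Finset.sum_congr rfl (fun j _ => h j), ← Finset.mul_sum]
  rw [div_mul_eq_div_div, div_self (Real.exp_ne_zero _), one_div]

theorem softmaxT_max_strictAnti
    (n : ℕ) (hn : 1 ≤ n) (z : Fin n → ℝ) (i : Fin n)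
    (hmax : ∀ j, z j ≤ z i) (hlt : ∃ j, z j < z i)
    (τ₁ τ₂ : ℝ) (hτ₁ : 0 < τ₁) (hτ : τ₁ < τ₂) :
    softmaxT z τ₂ i < softmaxT z τ₁ i := by
  have hτ₂ : 0 < τ₂ := hτ₁.trans hτ
  rw [softmaxT_eq_inv z τ₁ hτ₁, softmaxT_eq_inv z τ₂ hτ₂]
  obtain ⟨j₀, hj₀⟩ := hlt
  have hsum : (∑ j, Real.exp ((z j - z i) / τ₁)) < ∑ j, Real.exp ((z j - z i) / τ₂) := by
    apply Finset.sum_lt_sum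
    · intro j _
      apply Real.exp_le_exp.mpr
      rw [div_le_div_iff₀ hτ₁ hτ₂]
      nlinarith [hmax j]
    · exact ⟨j₀, Finset.mem_univ j₀, by
        apply Real.exp_lt_exp.mpr
        rw [div_lt_div_iff₀ hτ₁ hτ₂]
        nlinarith⟩
  have hpos : 0 < ∑ j, Real.exp ((z j - z i) / τ₁) := by
    apply Finset.sum_pos (fun j _ => Real.exp_pos _)
    exact ⟨j₀, Finset.mem_univ j₀⟩
  exact inv_strictAnti₀ hpos hsum
end

section
/- Let n ≥ 1, z : Fin n → ℝ, and let i be an index such that z i ≤ z j for all j and z i < z j for some j. Then the map τ ↦ softmaxτ(z, τ)_i is strictly monotone increasing on (0, ∞): for all 0 < τ₁ < τ₂ one has softmaxτ(z, τ₁)_i < softmaxτ(z, τ₂)_i. -/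
open Real Set

theorem softmaxT_min_strictMono
    (n : ℕ) (hn : 1 ≤ n) (z : Fin n → ℝ) (i : Fin n)
    (hmin : ∀ j, z i ≤ z j) (hlt : ∃ j, z i < z j)
    (τ₁ τ₂ : ℝ) (hτ₁ : 0 < τ₁) (hτ : τ₁ < τ₂) :
    softmaxT z τ₁ i < softmaxT z τ₂ i := by
  have hτ₂ : (0:ℝ) < τ₂ := hτ₁.trans hτ
  set S : ℝ → ℝ := fun τ => ∑ j, Real.exp ((z j - z i) / τ) with hS
  have key : ∀ τ : ℝ, 0 < τ → softmaxT z τ i = 1 / S τ := by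
    intro τ hτ'
    have hsum : S τ * Real.exp (z i / τ) = ∑ j, Real.exp (z j / τ) := by
      rw [hS, Finset.sum_mul]
      congr 1; ext j
      rw [← Real.exp_add, sub_div, sub_add_cancel]
    rw [softmaxT, ← hsum, mul_comm, ← div_div, div_self (Real.exp_ne_zero _)]
  rw [key τ₁ hτ₁, key τ₂ hτ₂]
  have hS2pos : 0 < S τ₂ := Finset.sum_pos (fun j _ => Real.exp_pos _)
    ⟨i, Finset.mem_univ i⟩
  have hlt' : S τ₂ < S τ₁ := by
    obtain ⟨j₀, hj₀⟩ := hlt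
    apply Finset.sum_lt_sum (s := Finset.univ)
    · intro j _
      apply Real.exp_le_exp.mpr
      gcongr
      exact sub_nonneg.mpr (hmin j)
    · refine ⟨j₀, Finset.mem_univ j₀, ?_⟩
      apply Real.exp_lt_exp.mpr
      gcongr
  exact one_div_lt_one_div_of_lt hS2pos hlt'
end

section
/- Let n ≥ 1, z : Fin n → ℝ, and fix an index i. For every τ > 0, the function τ ↦ softmaxτ(z, τ)_i has derivative at τ equal to softmaxτ(z, τ)_i · (m(τ) − z i) / τ², where m(τ) = ∑_j softmaxτ(z, τ)_j · z_j is the softmax-weighted mean of the logits (a HasDerivAt statement). -/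
open Real Set

/-! The tempered softmax is the plain softmax of the logit curves `t ↦ z j / t`. By the quotient
rule, along any differentiable curve of logits `x` the softmax `p` has derivative
`p i * (x' i - ∑ j, p j * x' j)`; with `x' j = - z j / τ ^ 2` the weighted sum becomes the
softmax-weighted mean of the logits. -/

noncomputable def softmax {ι : Type*} [Fintype ι] (x : ι → ℝ) (i : ι) : ℝ :=
  exp (x i) / ∑ j, exp (x j)

theorem softmaxT_eq_softmax {n : ℕ} (z : Fin n → ℝ) (τ : ℝ) (i : Fin n) :
    softmaxT z τ i = softmax (fun j => z j / τ) i :=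
  rfl

theorem sum_exp_pos {ι : Type*} [Fintype ι] [Nonempty ι] (x : ι → ℝ) :
    0 < ∑ j, exp (x j) :=
  Finset.sum_pos (fun j _ => exp_pos (x j)) Finset.univ_nonempty

theorem hasDerivAt_softmax {ι : Type*} [Fintype ι] [Nonempty ι] {x : ι → ℝ → ℝ} {x' : ι → ℝ}
    {τ : ℝ} (hx : ∀ j, HasDerivAt (x j) (x' j) τ) (i : ι) :
    HasDerivAt (fun t => softmax (fun j => x j t) i)
      (softmax (fun j => x j τ) i * (x' i - ∑ j, softmax (fun j => x j τ) j * x' j)) τ := by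
  have hS : HasDerivAt (fun t => ∑ j, exp (x j t)) (∑ j, exp (x j τ) * x' j) τ :=
    HasDerivAt.fun_sum fun j _ => (hx j).exp
  have hweighted : ∑ j, softmax (fun j => x j τ) j * x' j
      = (∑ j, exp (x j τ) * x' j) / ∑ j, exp (x j τ) := by
    simp only [softmax, div_mul_eq_mul_div, Finset.sum_div]
  refine ((hx i).exp.fun_div hS (sum_exp_pos fun j => x j τ).ne').congr_deriv ?_
  rw [hweighted, softmax]
  field_simp

theorem softmaxT_hasDerivAt_general
    (n : ℕ) (z : Fin n → ℝ) (i : Fin n) (τ : ℝ) (hτ : 0 < τ) :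
    HasDerivAt (fun t => softmaxT z t i)
      (softmaxT z τ i * ((∑ j, softmaxT z τ j * z j) - z i) / τ ^ 2) τ := by
  have : Nonempty (Fin n) := ⟨i⟩
  have hlogit : ∀ j, HasDerivAt (fun t => z j / t) (z j * -(τ ^ 2)⁻¹) τ :=
    fun j => by simpa only [div_eq_mul_inv] using (hasDerivAt_inv hτ.ne').const_mul (z j)
  refine (hasDerivAt_softmax hlogit i).congr_deriv ?_
  simp only [← softmaxT_eq_softmax, ← mul_assoc, ← Finset.sum_mul]
  ring

theorem softmaxT_hasDerivAt
    (n : ℕ) (hn : 1 ≤ n) (z : Fin n → ℝ) (i : Fin n) (τ : ℝ) (hτ : 0 < τ) :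
    HasDerivAt (fun t => softmaxT z t i)
      (softmaxT z τ i * ((∑ j, softmaxT z τ j * z j) - z i) / τ ^ 2) τ :=
  softmaxT_hasDerivAt_general n z i τ hτ
end

section
/- Let n ≥ 1 and z : Fin n → ℝ. Then H(softmaxτ(z, τ)) tends to log n as τ → ∞; and if z has a strict argmax (some i with z i > z j for all j ≠ i), then H(softmaxτ(z, τ)) tends to 0 as τ → 0⁺ (within (0, ∞)). -/
open Real Set Filter

/-! The entropy `∑ i, negMulLog (p i)` is continuous in `p`, so it suffices to
find the limit of the softmax vector itself. As `τ → ∞` every `exp (z i / τ)` tends to `1`, so the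
softmax tends to the uniform distribution, of entropy `log n`. As `τ → 0⁺`, after subtracting the
maximal logit `z i₀` from all logits (which leaves the softmax unchanged) the numerators tend to
the indicator of `i₀`, so the softmax tends to a point mass, of entropy `0`. -/

open scoped Topology

section Entropy

variable {ι : Type*} [Fintype ι]

noncomputable def entropy (p : ι → ℝ) : ℝ := ∑ i, negMulLog (p i)

theorem continuous_entropy : Continuous (entropy : (ι → ℝ) → ℝ) :=
  continuous_finsetSum _ fun i _ => continuous_negMulLog.comp (continuous_apply i)

theorem entropy_const_inv_card :
    entropy (fun _ : ι => (Fintype.card ι : ℝ)⁻¹) = log (Fintype.card ι) := by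
  rcases eq_or_ne (Fintype.card ι : ℝ) 0 with h | h
  · simp [entropy, h]
  · simp [entropy, negMulLog, log_inv, h]

theorem entropy_pi_single [DecidableEq ι] (i : ι) : entropy (Pi.single i (1 : ℝ)) = 0 := by
  refine Finset.sum_eq_zero fun j _ => ?_
  rcases eq_or_ne j i with rfl | hj
  · simp
  · simp [hj]

end Entropy

theorem neg_sum_softmaxT_mul_log_eq_entropy {n : ℕ} (z : Fin n → ℝ) (τ : ℝ) :
    -∑ i, softmaxT z τ i * log (softmaxT z τ i) = entropy (softmaxT z τ) := by
  simp only [entropy, negMulLog, neg_mul, Finset.sum_neg_distrib]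

theorem softmaxT_sub_const {n : ℕ} (z : Fin n → ℝ) (c : ℝ) :
    softmaxT (fun i => z i - c) = softmaxT z := by
  have h : ∀ i τ, exp ((z i - c) / τ) = exp (z i / τ) * exp (-(c / τ)) := fun i τ => by
    rw [← exp_add, sub_div, sub_eq_add_neg]
  ext τ i
  simp only [softmaxT, h, ← Finset.sum_mul, mul_div_mul_right _ _ (exp_ne_zero _)]

theorem tendsto_softmaxT_of_tendsto_exp {n : ℕ} {z : Fin n → ℝ} {l : Filter ℝ} {L : Fin n → ℝ}
    (hL : ∀ i, Tendsto (fun τ => exp (z i / τ)) l (𝓝 (L i))) (hsum : ∑ i, L i ≠ 0) :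
    Tendsto (softmaxT z) l (𝓝 fun i => L i / ∑ j, L j) :=
  tendsto_pi_nhds.2 fun i => (hL i).div (tendsto_finsetSum _ fun j _ => hL j) hsum

theorem tendsto_softmaxT_atTop {n : ℕ} [NeZero n] (z : Fin n → ℝ) :
    Tendsto (softmaxT z) atTop (𝓝 fun _ => (n : ℝ)⁻¹) := by
  have h : ∀ i, Tendsto (fun τ => exp (z i / τ)) atTop (𝓝 1) := fun i => by
    simpa using (tendsto_const_nhds.div_atTop tendsto_id).rexp
  simpa using tendsto_softmaxT_of_tendsto_exp h (by simp [NeZero.ne n])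

theorem tendsto_exp_div_nhdsGT_zero_of_neg {a : ℝ} (ha : a < 0) :
    Tendsto (fun τ => exp (a / τ)) (𝓝[>] 0) (𝓝 0) :=
  tendsto_exp_atBot.comp (tendsto_inv_nhdsGT_zero.const_mul_atTop_of_neg ha)

theorem tendsto_softmaxT_nhdsGT_zero {n : ℕ} (z : Fin n → ℝ) (i₀ : Fin n)
    (h : ∀ j, j ≠ i₀ → z j < z i₀) :
    Tendsto (softmaxT z) (𝓝[>] 0) (𝓝 (Pi.single i₀ 1)) := by
  have hexp : ∀ j, Tendsto (fun τ => exp ((z j - z i₀) / τ)) (𝓝[>] 0)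
      (𝓝 ((Pi.single i₀ 1 : Fin n → ℝ) j)) := by
    intro j
    rcases eq_or_ne j i₀ with rfl | hj
    · simp
    · simpa [hj] using tendsto_exp_div_nhdsGT_zero_of_neg (sub_neg.2 (h j hj))
  rw [← softmaxT_sub_const z (z i₀)]
  simpa using tendsto_softmaxT_of_tendsto_exp hexp (by simp)

theorem entropy_of_softmaxT_limits
    (n : ℕ) (hn : 1 ≤ n) (z : Fin n → ℝ) :
    Filter.Tendsto (fun τ : ℝ => -∑ i, softmaxT z τ i * Real.log (softmaxT z τ i))
      Filter.atTop (nhds (Real.log n)) ∧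
    ((∃ i, ∀ j, j ≠ i → z j < z i) →
      Filter.Tendsto (fun τ : ℝ => -∑ i, softmaxT z τ i * Real.log (softmaxT z τ i))
        (nhdsWithin 0 (Set.Ioi 0)) (nhds 0)) := by
  have : NeZero n := ⟨by omega⟩
  simp only [neg_sum_softmaxT_mul_log_eq_entropy]
  refine ⟨?_, fun ⟨i₀, hi₀⟩ => ?_⟩
  · have h := entropy_const_inv_card (ι := Fin n)
    rw [Fintype.card_fin] at h
    exact h ▸ (continuous_entropy.tendsto _).comp (tendsto_softmaxT_atTop z)
  · simpa only [entropy_pi_single, Function.comp_def] using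
      (continuous_entropy.tendsto _).comp (tendsto_softmaxT_nhdsGT_zero z i₀ hi₀)
end

section
/- Let n ≥ 1 and z : Fin n → ℝ. For every τ > 0, the Kullback–Leibler divergence of the tempered soft label from the uniform distribution on Fin n satisfies ∑_i softmaxτ(z, τ)_i · log(softmaxτ(z, τ)_i / (1/n)) = log n − H(softmaxτ(z, τ)). Consequently, if z is not constant (there exist i, j with z i ≠ z j), this KL divergence is strictly decreasing in τ on (0, ∞): raising the temperature drives the soft label strictly closer (in KL) to uniform. -/
open Real Set

/-!
With `β = 1/τ`, the softmax is the Gibbs distribution `p i ∝ exp (β z i)`, so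
`∑ p log p = β ⟨z⟩_β - log Z(β)` and the divergence from uniform is `log n + ∑ p log p`.
Differentiating, `d/dβ (∑ p log p) = β Var_β(z)`, which is positive for `β > 0` when `z` is not
constant (strict Cauchy–Schwarz for the Gibbs weights). Hence `∑ p log p` increases in `β` and
the divergence decreases in `τ`.
-/

open Finset

theorem sq_sum_mul_lt_sum_sq_mul_mul_sum {ι : Type*} [Fintype ι] {w z : ι → ℝ} (hw : ∀ i, 0 < w i)
    (hz : ∃ i j, z i ≠ z j) :
    (∑ i, z i * w i) ^ 2 < (∑ i, z i ^ 2 * w i) * ∑ i, w i := by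
  obtain ⟨i, j, hij⟩ := hz
  have hS : 0 < ∑ k, w k := sum_pos (fun k _ => hw k) ⟨i, mem_univ i⟩
  set μ := (∑ k, z k * w k) / ∑ k, w k
  have hcentered : 0 < ∑ k, (z k - μ) ^ 2 * w k := by
    obtain ⟨k, hk⟩ : ∃ k, z k ≠ μ := by
      by_contra! h
      exact hij ((h i).trans (h j).symm)
    have : z k - μ ≠ 0 := sub_ne_zero.mpr hk
    exact sum_pos' (fun l _ => mul_nonneg (sq_nonneg _) (hw l).le)
      ⟨k, mem_univ k, mul_pos (by positivity) (hw k)⟩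
  have hexpand : ∑ k, (z k - μ) ^ 2 * w k
      = ∑ k, z k ^ 2 * w k - 2 * μ * ∑ k, z k * w k + μ ^ 2 * ∑ k, w k := by
    simp only [mul_sum, ← sum_sub_distrib, ← sum_add_distrib]
    exact sum_congr rfl fun k _ => by ring
  have hvariance : (∑ k, z k ^ 2 * w k) * ∑ k, w k - (∑ k, z k * w k) ^ 2
      = (∑ k, w k) * ∑ k, (z k - μ) ^ 2 * w k := by
    rw [hexpand]
    simp only [μ]
    field_simp
    ring
  linarith [mul_pos hS hcentered]

section ExpMoment

variable {ι : Type*} [Fintype ι] (z : ι → ℝ)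

noncomputable def expMoment (k : ℕ) (β : ℝ) : ℝ := ∑ i, z i ^ k * exp (z i * β)

theorem expMoment_zero (β : ℝ) : expMoment z 0 β = ∑ i, exp (z i * β) := by
  simp [expMoment]

theorem expMoment_zero_pos [Nonempty ι] (β : ℝ) : 0 < expMoment z 0 β := by
  rw [expMoment_zero]
  exact sum_pos (fun i _ => exp_pos _) univ_nonempty

theorem hasDerivAt_expMoment (k : ℕ) (β : ℝ) :
    HasDerivAt (expMoment z k) (expMoment z (k + 1) β) β := by
  refine HasDerivAt.fun_sum fun i _ => ?_
  refine ((((hasDerivAt_id' β).const_mul (z i)).exp).const_mul (z i ^ k)).congr_deriv ?_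
  ring

theorem expMoment_one_sq_lt (hz : ∃ i j, z i ≠ z j) (β : ℝ) :
    expMoment z 1 β ^ 2 < expMoment z 2 β * expMoment z 0 β := by
  simpa [expMoment] using sq_sum_mul_lt_sum_sq_mul_mul_sum (fun i => exp_pos (z i * β)) hz

/-- `∑ p log p` for the Gibbs distribution `p i ∝ exp (z i * β)`. -/
noncomputable def gibbsNegEntropy (β : ℝ) : ℝ :=
  β * expMoment z 1 β / expMoment z 0 β - log (expMoment z 0 β)

variable [Nonempty ι]

/-- The derivative is `β` times the Gibbs variance of `z`. -/
theorem hasDerivAt_gibbsNegEntropy (β : ℝ) :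
    HasDerivAt (gibbsNegEntropy z)
      (β * (expMoment z 2 β * expMoment z 0 β - expMoment z 1 β ^ 2) / expMoment z 0 β ^ 2)
      β := by
  have hZ := (expMoment_zero_pos z β).ne'
  have h0 := hasDerivAt_expMoment z 0 β
  have h1 := hasDerivAt_expMoment z 1 β
  refine ((((hasDerivAt_id' β).mul h1).div h0 hZ).sub (h0.log hZ)).congr_deriv ?_
  simp only [Pi.mul_apply]
  field_simp
  ring

theorem gibbsNegEntropy_strictMonoOn (hz : ∃ i j, z i ≠ z j) :
    StrictMonoOn (gibbsNegEntropy z) (Ioi 0) := by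
  refine strictMonoOn_of_hasDerivWithinAt_pos (convex_Ioi 0)
    (fun β _ => (hasDerivAt_gibbsNegEntropy z β).continuousAt.continuousWithinAt)
    (fun β _ => (hasDerivAt_gibbsNegEntropy z β).hasDerivWithinAt) fun β hβ => ?_
  rw [interior_Ioi] at hβ
  have hvar := sub_pos.mpr (expMoment_one_sq_lt z hz β)
  have hZ := expMoment_zero_pos z β
  exact div_pos (mul_pos hβ hvar) (by positivity)

end ExpMoment

theorem sum_mul_log_div_inv_card {ι : Type*} [Fintype ι] {p : ι → ℝ} (hp : ∑ i, p i = 1) :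
    ∑ i, p i * log (p i / (1 / Fintype.card ι)) = log (Fintype.card ι) + ∑ i, p i * log (p i) := by
  have : Nonempty ι := univ_nonempty_iff.mp (univ.nonempty_of_sum_ne_zero (f := p) (by simp [hp]))
  have hcard : (Fintype.card ι : ℝ) ≠ 0 := Nat.cast_ne_zero.mpr Fintype.card_ne_zero
  have hterm (i : ι) :
      p i * log (p i / (1 / Fintype.card ι)) = p i * log (p i) + log (Fintype.card ι) * p i := by
    rcases eq_or_ne (p i) 0 with h | h
    · simp [h]
    · rw [one_div, div_inv_eq_mul, log_mul h hcard]
      ring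
  rw [sum_congr rfl fun i _ => hterm i, sum_add_distrib, ← mul_sum, hp, mul_one, add_comm]

section Softmax

variable {n : ℕ} (z : Fin n → ℝ)

theorem softmaxT_eq (τ : ℝ) (i : Fin n) :
    softmaxT z τ i = exp (z i * τ⁻¹) / expMoment z 0 τ⁻¹ := by
  simp only [softmaxT, expMoment_zero, div_eq_mul_inv]

variable [NeZero n]

theorem sum_softmaxT (τ : ℝ) : ∑ i, softmaxT z τ i = 1 := by
  simp only [softmaxT_eq, ← sum_div, ← expMoment_zero]
  exact div_self (expMoment_zero_pos z _).ne'

theorem sum_softmaxT_mul_log (τ : ℝ) :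
    ∑ i, softmaxT z τ i * log (softmaxT z τ i) = gibbsNegEntropy z τ⁻¹ := by
  have hZ := expMoment_zero_pos z τ⁻¹
  simp only [softmaxT_eq, log_div (exp_ne_zero _) hZ.ne', log_exp, gibbsNegEntropy]
  calc _ = (τ⁻¹ * expMoment z 1 τ⁻¹ - log (expMoment z 0 τ⁻¹) * expMoment z 0 τ⁻¹)
        / expMoment z 0 τ⁻¹ := by
        simp only [expMoment, mul_sum, ← sum_sub_distrib, sum_div]
        exact sum_congr rfl fun i _ => by ring
    _ = _ := by rw [sub_div, mul_div_cancel_right₀ _ hZ.ne']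

end Softmax

theorem kl_to_uniform_eq_and_strictAnti
    (n : ℕ) (hn : 1 ≤ n) (z : Fin n → ℝ) :
    (∀ τ : ℝ, 0 < τ →
      ∑ i, softmaxT z τ i * Real.log (softmaxT z τ i / (1 / (n : ℝ)))
        = Real.log n - (-∑ i, softmaxT z τ i * Real.log (softmaxT z τ i))) ∧
    ((∃ i j, z i ≠ z j) →
      StrictAntiOn
        (fun τ : ℝ => ∑ i, softmaxT z τ i * Real.log (softmaxT z τ i / (1 / (n : ℝ))))
        (Set.Ioi 0)) := by
  have : NeZero n := ⟨by omega⟩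
  have hkl (τ : ℝ) : ∑ i, softmaxT z τ i * log (softmaxT z τ i / (1 / (n : ℝ)))
      = log n + ∑ i, softmaxT z τ i * log (softmaxT z τ i) := by
    simpa only [Fintype.card_fin] using sum_mul_log_div_inv_card (sum_softmaxT z τ)
  refine ⟨fun τ _ => by rw [hkl, sub_neg_eq_add], fun hz a ha b hb hab => ?_⟩
  have hinv : StrictAntiOn (gibbsNegEntropy z ∘ (·⁻¹)) (Ioi (0 : ℝ)) :=
    (gibbsNegEntropy_strictMonoOn z hz).comp_strictAntiOn strictAntiOn_inv_pos
      fun τ hτ => mem_Ioi.mpr (inv_pos.mpr hτ)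
  simp only [hkl, sum_softmaxT_mul_log]
  exact add_lt_add_right (hinv ha hb hab) _
end
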